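/- arXiv:1607.01169 — 3 statements merged into one kernel-verified Lean document; each statement's English description precedes it below -/
import Mathlib

section
/- Let (A,B,I,J) be an ADHM datum with A,B ∈ End(V), I ∈ Hom(W,V), J ∈ Hom(V,W) which is stable (no proper subspace S ⊊ V is invariant under A and B and contains the image of I). If h ∈ GL(V) satisfies hA = Ah, hB = Bh and hI = I, then h = 1_V. -/
/-- If `(A,B,I,J)` is a stable ADHM datum and `h ∈ GL(V)` commutes with `A`, `B` and fixes `I`,
then `h = 1`. -/
theorem stabilizer_trivial_of_stable
    {V W : Type*} [AddCommGroup V] [Module ℂ V] [FiniteDimensional ℂ V]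
    [AddCommGroup W] [Module ℂ W] [FiniteDimensional ℂ W]
    (A B : V →ₗ[ℂ] V) (I : W →ₗ[ℂ] V) (J : V →ₗ[ℂ] W)
    (hstab : ∀ S : Submodule ℂ V, (∀ x ∈ S, A x ∈ S) → (∀ x ∈ S, B x ∈ S) →
      LinearMap.range I ≤ S → S = ⊤)
    (h : V ≃ₗ[ℂ] V)
    (hA : h.toLinearMap ∘ₗ A = A ∘ₗ h.toLinearMap)
    (hB : h.toLinearMap ∘ₗ B = B ∘ₗ h.toLinearMap)
    (hI : h.toLinearMap ∘ₗ I = I) :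
    h = LinearEquiv.refl ℂ V := by
  set S : Submodule ℂ V := LinearMap.ker (h.toLinearMap - LinearMap.id) with hS
  have hmem : ∀ x, x ∈ S ↔ h x = x := by
    intro x
    simp [hS, LinearMap.mem_ker, sub_eq_zero]
  have hSA : ∀ x ∈ S, A x ∈ S := by
    intro x hx
    rw [hmem] at hx ⊢
    have := congrFun (congrArg DFunLike.coe hA) x
    simp only [LinearMap.comp_apply, LinearEquiv.coe_coe] at this
    rw [this, hx]
  have hSB : ∀ x ∈ S, B x ∈ S := by
    intro x hx
    rw [hmem] at hx ⊢
    have := congrFun (congrArg DFunLike.coe hB) x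
    simp only [LinearMap.comp_apply, LinearEquiv.coe_coe] at this
    rw [this, hx]
  have hSI : LinearMap.range I ≤ S := by
    rintro x ⟨w, rfl⟩
    rw [hmem]
    have := congrFun (congrArg DFunLike.coe hI) w
    simpa using this
  have htop : S = ⊤ := hstab S hSA hSB hSI
  ext x
  have : x ∈ S := htop ▸ Submodule.mem_top
  simpa using (hmem x).mp this
end

section
/- Let (A,B,I,J) be a stable ADHM datum of numerical type (1,c), i.e., dim W = 1. Then J = 0, provided [A,B] + IJ = 0. -/
/-!
For a word `w` in `A, B` write `τ w = J ∘ w(A,B) ∘ I ∈ End W`. If every `τ w` vanishes, then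
`⋂_w ker (J ∘ w(A,B))` is an `A, B`-invariant subspace containing `Im I`, so it is `V` by
stability and `J = 0`.

The `τ w` vanish by induction on the length `n` of `w`. Since `IJ = BA - AB`, swapping two
adjacent letters changes `τ` by a product `τ u ∘ τ v` of shorter words, so `τ` takes one value
`T` on all words of length `n` with a given letter content. For a word `w` with one more `B`, the
Leibniz rule expands `0 = tr (w A - A w)` into one term `tr (u IJ v) = tr τ (v u) = tr T` per
occurrence of `B` in `w`. Hence `tr T = 0` in characteristic zero, and `T = 0` because `dim W = 1`.
-/

open LinearMap Module

namespace ADHM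

def word {R : Type*} [Monoid R] (a b : R) (w : List Bool) : R :=
  (w.map (cond · b a)).prod

section Word

variable {R : Type*}

@[simp] lemma word_nil [Monoid R] (a b : R) : word a b [] = 1 := rfl

@[simp] lemma word_cons [Monoid R] (a b : R) (x : Bool) (w : List Bool) :
    word a b (x :: w) = cond x b a * word a b w := List.prod_cons

@[simp] lemma word_append [Monoid R] (a b : R) (u v : List Bool) :
    word a b (u ++ v) = word a b u * word a b v := by
  simp [word]

lemma word_swap [Ring R] (a b : R) (u v : List Bool) :
    word a b (u ++ true :: false :: v) =
      word a b (u ++ false :: true :: v) + word a b u * (b * a - a * b) * word a b v := by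
  simp only [word_append, word_cons, cond_true, cond_false]
  noncomm_ring

end Word

section

variable {K V W : Type*} [Field K] [AddCommGroup V] [Module K V] [AddCommGroup W] [Module K W]
  {A B : Module.End K V} {I : W →ₗ[K] V} {J : V →ₗ[K] W}

lemma comp_word_swap_comp (hIJ : I ∘ₗ J = B * A - A * B) (u v : List Bool) :
    J ∘ₗ word A B (u ++ true :: false :: v) ∘ₗ I =
      J ∘ₗ word A B (u ++ false :: true :: v) ∘ₗ I +
        (J ∘ₗ word A B u ∘ₗ I) ∘ₗ (J ∘ₗ word A B v ∘ₗ I) := by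
  rw [word_swap, ← hIJ]
  ext
  simp [Module.End.mul_apply]

lemma comp_word_comp_eq_of_perm (hIJ : I ∘ₗ J = B * A - A * B) {n : ℕ}
    (hlow : ∀ u : List Bool, u.length < n → J ∘ₗ word A B u ∘ₗ I = 0)
    {l l' : List Bool} (h : l.Perm l') (hl : l.length = n) :
    J ∘ₗ word A B l ∘ₗ I = J ∘ₗ word A B l' ∘ₗ I := by
  suffices ∀ p, (p ++ l).length = n →
      J ∘ₗ word A B (p ++ l) ∘ₗ I = J ∘ₗ word A B (p ++ l') ∘ₗ I by
    simpa using this [] hl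
  clear hl
  induction h with
  | nil => intro p _; rfl
  | cons x _ ih =>
    intro p hp
    simpa using ih (p ++ [x]) (by simpa using hp)
  | swap x y l =>
    intro p hp
    have hl : J ∘ₗ word A B l ∘ₗ I = 0 :=
      hlow l (by simp only [List.length_append, List.length_cons] at hp; omega)
    cases x <;> cases y <;> simp only [comp_word_swap_comp hIJ, hl, comp_zero, add_zero]
  | trans h₁ _ ih₁ ih₂ =>
    intro p hp
    rw [ih₁ p hp, ih₂ p (by simpa [h₁.length_eq] using hp)]

lemma trace_mul_comp_mul [FiniteDimensional K V] [FiniteDimensional K W] (X Y : Module.End K V) :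
    trace K V (X * (I ∘ₗ J) * Y) = trace K W (J ∘ₗ (Y * X) ∘ₗ I) := by
  calc trace K V (X * (I ∘ₗ J) * Y) = trace K V (((Y * X) ∘ₗ I) ∘ₗ J) := by
        rw [trace_mul_comm, ← mul_assoc]; rfl
    _ = trace K W (J ∘ₗ (Y * X) ∘ₗ I) := trace_comp_comm' _ _

lemma trace_word_mul_sub_mul_word [FiniteDimensional K V] [FiniteDimensional K W]
    (hIJ : I ∘ₗ J = B * A - A * B) {L : List Bool} {t : K}
    (hL : ∀ l : List Bool, l.Perm L → trace K W (J ∘ₗ word A B l ∘ₗ I) = t)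
    (u w : List Bool) (huw : (u ++ w).Perm (true :: L)) :
    trace K V (word A B u * (word A B w * A - A * word A B w)) = w.count true * t := by
  induction w generalizing u with
  | nil => simp
  | cons x w ih =>
    have hsplit : word A B (x :: w) * A - A * word A B (x :: w) =
        cond x B A * (word A B w * A - A * word A B w) +
          (cond x B A * A - A * cond x B A) * word A B w := by
      simp only [word_cons]; noncomm_ring
    have hrec := ih (u ++ [x]) (by simpa using huw)
    rw [word_append, word_cons, word_nil, mul_one] at hrec
    rw [hsplit, mul_add, map_add, ← mul_assoc, hrec]
    cases x with
    | false => simp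
    | true =>
      have hperm : (w ++ u).Perm L :=
        List.perm_append_comm.trans ((List.perm_cons true).mp (List.perm_middle.symm.trans huw))
      simp only [cond_true, ← hIJ, ← mul_assoc, trace_mul_comp_mul, ← word_append, hL _ hperm,
        List.count_cons_self]
      push_cast; ring

lemma trace_comp_word_comp_eq_zero [FiniteDimensional K V] [FiniteDimensional K W] [CharZero K]
    (hIJ : I ∘ₗ J = B * A - A * B) {n : ℕ}
    (hlow : ∀ u : List Bool, u.length < n → J ∘ₗ word A B u ∘ₗ I = 0)
    {L : List Bool} (hL : L.length = n) :
    trace K W (J ∘ₗ word A B L ∘ₗ I) = 0 := by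
  have key := trace_word_mul_sub_mul_word hIJ
    (fun l hl ↦ by rw [comp_word_comp_eq_of_perm hIJ hlow hl (hl.length_eq.trans hL)])
    [] (true :: L) List.Perm.rfl
  rw [word_nil, one_mul, map_sub, trace_mul_comm, sub_self, List.count_cons_self] at key
  push_cast at key
  exact (mul_eq_zero.mp key.symm).resolve_left (Nat.cast_add_one_ne_zero _)

lemma eq_zero_of_trace_eq_zero_of_finrank_eq_one [FiniteDimensional K W] (hW : finrank K W = 1)
    {f : Module.End K W} (hf : trace K W f = 0) : f = 0 := by
  obtain ⟨c, rfl⟩ := (f.existsUnique_eq_smul_id_of_finrank_eq_one hW).exists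
  simp_all [trace_id]

lemma comp_word_comp_eq_zero [FiniteDimensional K V] [FiniteDimensional K W] [CharZero K]
    (hW : finrank K W = 1) (hIJ : I ∘ₗ J = B * A - A * B) (w : List Bool) :
    J ∘ₗ word A B w ∘ₗ I = 0 := by
  induction h : w.length using Nat.strong_induction_on generalizing w with
  | _ n ih =>
    exact eq_zero_of_trace_eq_zero_of_finrank_eq_one hW
      (trace_comp_word_comp_eq_zero hIJ (fun u hu ↦ ih _ hu u rfl) h)

lemma eq_zero_of_comp_word_comp_eq_zero
    (hstab : ∀ S : Submodule K V, (∀ x ∈ S, A x ∈ S) → (∀ x ∈ S, B x ∈ S) →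
      range I ≤ S → S = ⊤)
    (h : ∀ w, J ∘ₗ word A B w ∘ₗ I = 0) : J = 0 := by
  set S := ⨅ w, ker (J ∘ₗ word A B w)
  have hmem (x : V) : x ∈ S ↔ ∀ w, J (word A B w x) = 0 := by simp [S, Submodule.mem_iInf]
  have hS : S = ⊤ := by
    refine hstab S (fun x hx ↦ (hmem _).2 fun w ↦ ?_) (fun x hx ↦ (hmem _).2 fun w ↦ ?_) ?_
    · simpa [Module.End.mul_apply] using (hmem x).1 hx (w ++ [false])
    · simpa [Module.End.mul_apply] using (hmem x).1 hx (w ++ [true])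
    · rintro _ ⟨y, rfl⟩
      exact (hmem _).2 fun w ↦ LinearMap.congr_fun (h w) y
  ext x
  simpa using (hmem x).1 (hS ▸ Submodule.mem_top) []

end

end ADHM

/-- For a stable ADHM datum of numerical type `(1,c)` (i.e. `dim W = 1`) satisfying
`[A,B] + IJ = 0`, one has `J = 0`. -/
theorem J_eq_zero_of_rank_one
    {V W : Type*} [AddCommGroup V] [Module ℂ V] [FiniteDimensional ℂ V]
    [AddCommGroup W] [Module ℂ W] [FiniteDimensional ℂ W]
    (hW : Module.finrank ℂ W = 1)
    (A B : V →ₗ[ℂ] V) (I : W →ₗ[ℂ] V) (J : V →ₗ[ℂ] W)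
    (hADHM : A ∘ₗ B - B ∘ₗ A + I ∘ₗ J = 0)
    (hstab : ∀ S : Submodule ℂ V, (∀ x ∈ S, A x ∈ S) → (∀ x ∈ S, B x ∈ S) →
      LinearMap.range I ≤ S → S = ⊤) :
    J = 0 := by
  have hIJ : I ∘ₗ J = B * A - A * B := by
    rw [eq_neg_of_add_eq_zero_right hADHM, neg_sub]
    rfl
  exact ADHM.eq_zero_of_comp_word_comp_eq_zero hstab (ADHM.comp_word_comp_eq_zero hW hIJ)
end

section
/- Let d₁ : End(V) ⊕ End(V) ⊕ Hom(W,V) ⊕ Hom(V,W) → End(V) be given by d₁(a,b,i,j) = [a,B] + [A,b] + Ij + iJ, where (A,B,I,J) is a stable ADHM datum satisfying [A,B] + IJ = 0. Then d₁ is surjective. -/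
open LinearMap Module

/-- Trace pairing nondegeneracy: if `trace (M ∘ N) = 0` for all `N`, then `M = 0`. -/
lemma trace_comp_eq_zero_forall {V W : Type*} [AddCommGroup V] [Module ℂ V]
    [FiniteDimensional ℂ V] [AddCommGroup W] [Module ℂ W] [FiniteDimensional ℂ W]
    (M : W →ₗ[ℂ] V) (h : ∀ N : V →ₗ[ℂ] W, LinearMap.trace ℂ V (M ∘ₗ N) = 0) : M = 0 := by
  ext w
  rw [LinearMap.zero_apply, ← Module.forall_dual_apply_eq_zero_iff ℂ]
  intro f
  have key : M ∘ₗ dualTensorHom ℂ V W (f ⊗ₜ w) = dualTensorHom ℂ V V (f ⊗ₜ (M w)) := by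
    ext x; simp [dualTensorHom_apply]
  have := h (dualTensorHom ℂ V W (f ⊗ₜ w))
  rw [key, trace_eq_contract_apply] at this
  simpa using this

/-- For a stable ADHM datum `(A,B,I,J)` with `[A,B] + IJ = 0` and `W ≠ 0`, the map
`d₁(a,b,i,j) = [a,B] + [A,b] + Ij + iJ` is surjective onto `End(V)`. -/
theorem d1_surjective
    {V W : Type*} [AddCommGroup V] [Module ℂ V] [FiniteDimensional ℂ V]
    [AddCommGroup W] [Module ℂ W] [FiniteDimensional ℂ W]
    (hW : 1 ≤ Module.finrank ℂ W)
    (A B : V →ₗ[ℂ] V) (I : W →ₗ[ℂ] V) (J : V →ₗ[ℂ] W)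
    (hADHM : A ∘ₗ B - B ∘ₗ A + I ∘ₗ J = 0)
    (hstab : ∀ S : Submodule ℂ V, (∀ x ∈ S, A x ∈ S) → (∀ x ∈ S, B x ∈ S) →
      LinearMap.range I ≤ S → S = ⊤) :
    ∀ c : V →ₗ[ℂ] V, ∃ (a b : V →ₗ[ℂ] V) (i : W →ₗ[ℂ] V) (j : V →ₗ[ℂ] W),
      (a ∘ₗ B - B ∘ₗ a) + (A ∘ₗ b - b ∘ₗ A) + I ∘ₗ j + i ∘ₗ J = c := by
  -- the map d₁ as a linear map
  set d1 : ((V →ₗ[ℂ] V) × (V →ₗ[ℂ] V) × (W →ₗ[ℂ] V) × (V →ₗ[ℂ] W)) →ₗ[ℂ] (V →ₗ[ℂ] V) :=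
    { toFun := fun p => (p.1 ∘ₗ B - B ∘ₗ p.1) + (A ∘ₗ p.2.1 - p.2.1 ∘ₗ A)
        + I ∘ₗ p.2.2.2 + p.2.2.1 ∘ₗ J
      map_add' := by
        intro p q
        simp only [Prod.fst_add, Prod.snd_add, add_comp, comp_add]
        abel
      map_smul' := by
        intro r p
        simp only [Prod.smul_fst, Prod.smul_snd, smul_comp, comp_smul, RingHom.id_apply,
          smul_sub, smul_add] } with hd1
  -- it suffices that the range of d₁ is ⊤
  suffices hrange : LinearMap.range d1 = ⊤ by
    intro c
    obtain ⟨p, hp⟩ : c ∈ LinearMap.range d1 := hrange ▸ Submodule.mem_top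
    exact ⟨p.1, p.2.1, p.2.2.1, p.2.2.2, hp⟩
  -- trace representation of dual functionals on End(V)
  by_contra hne
  obtain ⟨f, hf0, hfbot⟩ := Submodule.exists_dual_map_eq_bot_of_lt_top
    (lt_top_iff_ne_top.mpr hne) inferInstance
  have hfvan : ∀ x ∈ LinearMap.range d1, f x = 0 := by
    intro x hx
    have : f x ∈ Submodule.map f (LinearMap.range d1) := ⟨x, hx, rfl⟩
    rw [hfbot] at this
    simpa using this
  -- the map ψ ↦ trace(ψ ∘ ·) from End(V) to its dual
  set T : (V →ₗ[ℂ] V) →ₗ[ℂ] Module.Dual ℂ (V →ₗ[ℂ] V) :=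
    { toFun := fun ψ => LinearMap.trace ℂ V ∘ₗ LinearMap.llcomp ℂ V V V ψ
      map_add' := by intro x y; ext φ; simp [add_comp]
      map_smul' := by intro r x; ext φ; simp [smul_comp] } with hT
  have hTinj : Function.Injective T := by
    rw [← LinearMap.ker_eq_bot]
    rw [LinearMap.ker_eq_bot']
    intro ψ hψ
    apply trace_comp_eq_zero_forall ψ
    intro N
    exact congrFun (congrArg DFunLike.coe hψ) N
  have hTsurj : Function.Surjective T :=
    (LinearMap.injective_iff_surjective_of_finrank_eq_finrank
      (Subspace.dual_finrank_eq (V := V →ₗ[ℂ] V)).symm).mp hTinj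
  obtain ⟨ψ, hψ⟩ := hTsurj f
  have hfeq : ∀ φ : V →ₗ[ℂ] V, f φ = LinearMap.trace ℂ V (ψ ∘ₗ φ) := by
    intro φ; rw [← hψ]; rfl
  -- extract the four relations
  have hvan : ∀ (a b : V →ₗ[ℂ] V) (i : W →ₗ[ℂ] V) (j : V →ₗ[ℂ] W),
      LinearMap.trace ℂ V (ψ ∘ₗ ((a ∘ₗ B - B ∘ₗ a) + (A ∘ₗ b - b ∘ₗ A)
        + I ∘ₗ j + i ∘ₗ J)) = 0 := by
    intro a b i j
    rw [← hfeq]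
    exact hfvan _ ⟨(a, b, i, j), rfl⟩
  have hB : B ∘ₗ ψ - ψ ∘ₗ B = 0 := by
    apply trace_comp_eq_zero_forall
    intro a
    have hv := hvan a 0 0 0
    simp only [comp_zero, zero_comp, add_zero, sub_zero] at hv
    have e2 : LinearMap.trace ℂ V (B ∘ₗ (ψ ∘ₗ a)) = LinearMap.trace ℂ V ((ψ ∘ₗ a) ∘ₗ B) :=
      LinearMap.trace_comp_comm' (ψ ∘ₗ a) B
    simp only [sub_comp, comp_sub, map_sub, comp_assoc] at hv e2 ⊢
    linear_combination hv + e2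
  have hA : ψ ∘ₗ A - A ∘ₗ ψ = 0 := by
    apply trace_comp_eq_zero_forall
    intro b
    have hv := hvan 0 b 0 0
    simp only [comp_zero, zero_comp, add_zero, sub_zero, zero_sub, zero_add, neg_zero,
      sub_self] at hv
    have e2 : LinearMap.trace ℂ V (A ∘ₗ (ψ ∘ₗ b)) = LinearMap.trace ℂ V ((ψ ∘ₗ b) ∘ₗ A) :=
      LinearMap.trace_comp_comm' (ψ ∘ₗ b) A
    simp only [sub_comp, comp_sub, map_sub, comp_assoc] at hv e2 ⊢
    linear_combination hv - e2
  have hI : ψ ∘ₗ I = 0 := by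
    apply trace_comp_eq_zero_forall
    intro j
    have hv := hvan 0 0 0 j
    simp only [comp_zero, zero_comp, add_zero, sub_zero, zero_add, sub_self,
      zero_sub, neg_zero] at hv
    simp only [comp_assoc] at hv ⊢
    exact hv
  -- stability implies ψ = 0
  have hker : LinearMap.ker ψ = ⊤ := by
    apply hstab
    · intro x hx
      rw [LinearMap.mem_ker] at hx ⊢
      have : ψ ∘ₗ A = A ∘ₗ ψ := by rwa [sub_eq_zero] at hA
      calc ψ (A x) = (ψ ∘ₗ A) x := rfl
        _ = A (ψ x) := by rw [this]; rfl
        _ = 0 := by rw [hx, map_zero]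
    · intro x hx
      rw [LinearMap.mem_ker] at hx ⊢
      have : ψ ∘ₗ B = B ∘ₗ ψ := by rwa [sub_eq_zero, eq_comm] at hB
      calc ψ (B x) = (ψ ∘ₗ B) x := rfl
        _ = B (ψ x) := by rw [this]; rfl
        _ = 0 := by rw [hx, map_zero]
    · rintro x ⟨w, rfl⟩
      rw [LinearMap.mem_ker]
      exact congrFun (congrArg DFunLike.coe hI) w
  have hψ0 : ψ = 0 := by
    ext x
    have : x ∈ LinearMap.ker ψ := hker ▸ Submodule.mem_top
    simpa using this
  apply hf0
  rw [← hψ, hψ0, map_zero]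
end
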